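/- arXiv:2002.09774 — 10 statements merged into one kernel-verified Lean document; each statement's English description precedes it below -/
import Mathlib

section
/- Let f, f^ν, g, g^ν : ℝⁿ → (-∞, ∞] with f^ν epi-converging to f and g^ν epi-converging to g. If additionally -g^ν epi-converges to -g (equivalently g^ν(x^ν) → g(x) whenever x^ν → x), then f^ν + g^ν epi-converges to f + g. -/
open Filter Topology

/-- Inner (Painlevé–Kuratowski) limit of a sequence of sets. -/
def LimInn {α : Type*} [TopologicalSpace α] (C : ℕ → Set α) : Set α :=
  {x | ∃ u : ℕ → α, (∀ᶠ ν in atTop, u ν ∈ C ν) ∧ Tendsto u atTop (𝓝 x)}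

/-- Outer (Painlevé–Kuratowski) limit of a sequence of sets. -/
def LimOut {α : Type*} [TopologicalSpace α] (C : ℕ → Set α) : Set α :=
  {x | ∃ N : ℕ → ℕ, StrictMono N ∧
    ∃ u : ℕ → α, (∀ k, u k ∈ C (N k)) ∧ Tendsto u atTop (𝓝 x)}

/-- Epi-convergence, via the liminf/limsup characterization. -/
def EpiConverges {α : Type*} [TopologicalSpace α]
    (fs : ℕ → α → EReal) (f : α → EReal) : Prop :=
  (∀ x : α, ∀ u : ℕ → α, Tendsto u atTop (𝓝 x) →
      f x ≤ liminf (fun ν => fs ν (u ν)) atTop) ∧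
  (∀ x : α, ∃ u : ℕ → α, Tendsto u atTop (𝓝 x) ∧
      limsup (fun ν => fs ν (u ν)) atTop ≤ f x)

/-!
The liminf inequality for the sum is superadditivity of `liminf`. For the limsup inequality,
take a recovery sequence `xᵛ → x` for `f`: since `-gᵛ →e -g` as well, `gᵛ(xᵛ) → g(x)`, and a
convergent summand can be pulled out of a `limsup`.
-/

lemma EReal.limsup_add_le_add_of_tendsto {ι : Type*} {l : Filter ι} [l.NeBot]
    {u v : ι → EReal} {a b : EReal} (ha : a ≠ ⊥) (hb : b ≠ ⊥)
    (hu : limsup u l ≤ a) (hv : Tendsto v l (𝓝 b)) :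
    limsup (u + v) l ≤ a + b := by
  rcases eq_or_ne b ⊤ with rfl | hb_top
  · rw [EReal.add_top_of_ne_bot ha]
    exact le_top
  · rw [← hv.limsup_eq] at hb hb_top ⊢
    exact (EReal.limsup_add_le (.inr hb_top) (.inr hb)).trans (add_le_add_left hu _)

section

variable {α : Type*} [TopologicalSpace α] {gs : ℕ → α → EReal} {g : α → EReal}

lemma EpiConverges.limsup_le_of_neg
    (hng : EpiConverges (fun ν x => -(gs ν x)) (fun x => -(g x)))
    {x : α} {u : ℕ → α} (hu : Tendsto u atTop (𝓝 x)) :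
    limsup (fun ν => gs ν (u ν)) atTop ≤ g x := by
  have h := hng.1 x u hu
  rw [show (fun ν => -(gs ν (u ν))) = -(fun ν => gs ν (u ν)) from rfl, EReal.liminf_neg] at h
  exact EReal.neg_le_neg_iff.mp h

lemma EpiConverges.tendsto_of_neg (hg : EpiConverges gs g)
    (hng : EpiConverges (fun ν x => -(gs ν x)) (fun x => -(g x)))
    {x : α} {u : ℕ → α} (hu : Tendsto u atTop (𝓝 x)) :
    Tendsto (fun ν => gs ν (u ν)) atTop (𝓝 (g x)) :=
  tendsto_of_le_liminf_of_limsup_le (hg.1 x u hu) (hng.limsup_le_of_neg hu)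

end

theorem epiConverges_add_of_neg_general {n : ℕ}
    (f g : (Fin n → ℝ) → EReal) (fs gs : ℕ → (Fin n → ℝ) → EReal)
    (hf' : ∀ x, f x ≠ ⊥) (hg' : ∀ x, g x ≠ ⊥)
    (hf : EpiConverges fs f) (hg : EpiConverges gs g)
    (hng : EpiConverges (fun ν x => -(gs ν x)) (fun x => -(g x))) :
    EpiConverges (fun ν x => fs ν x + gs ν x) (fun x => f x + g x) := by
  constructor
  · intro x u hu
    exact (add_le_add (hf.1 x u hu) (hg.1 x u hu)).trans EReal.le_liminf_add
  · intro x
    obtain ⟨u, hu, hlim⟩ := hf.2 x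
    exact ⟨u, hu, EReal.limsup_add_le_add_of_tendsto (hf' x) (hg' x) hlim
      (hg.tendsto_of_neg hng hu)⟩

theorem epiConverges_add_of_neg {n : ℕ}
    (f g : (Fin n → ℝ) → EReal) (fs gs : ℕ → (Fin n → ℝ) → EReal)
    (hf' : ∀ x, f x ≠ ⊥) (hg' : ∀ x, g x ≠ ⊥)
    (hfs' : ∀ ν x, fs ν x ≠ ⊥) (hgs' : ∀ ν x, gs ν x ≠ ⊥)
    (hf : EpiConverges fs f) (hg : EpiConverges gs g)
    (hng : EpiConverges (fun ν x => -(gs ν x)) (fun x => -(g x))) :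
    EpiConverges (fun ν x => fs ν x + gs ν x) (fun x => f x + g x) :=
  epiConverges_add_of_neg_general f g fs gs hf' hg' hf hg hng
end

section
/- Let f, f^ν, g, g^ν : ℝⁿ → (-∞, ∞] with f^ν epi-converging to f, g^ν epi-converging to g, and suppose f^ν(x) → f(x) and g^ν(x) → g(x) pointwise for every x ∈ ℝⁿ. Then f^ν + g^ν epi-converges to f + g. -/
open Filter Topology

/-!
The liminf inequality for `fs + gs` is the sum of those for `fs` and `gs`, by superadditivity of
`liminf` on `EReal`. For the limsup inequality the constant sequence is a recovery sequence:
`fs ν x + gs ν x → f x + g x` because addition on `EReal` is continuous away from `⊥ + ⊤`,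
which finiteness from below of `f` and `g` excludes.
-/

theorem Filter.Tendsto.ereal_add {ι : Type*} {l : Filter ι} {u v : ι → EReal} {a b : EReal}
    (hu : Tendsto u l (𝓝 a)) (hv : Tendsto v l (𝓝 b))
    (h : a ≠ ⊤ ∨ b ≠ ⊥) (h' : a ≠ ⊥ ∨ b ≠ ⊤) :
    Tendsto (fun i => u i + v i) l (𝓝 (a + b)) :=
  (EReal.continuousAt_add (p := (a, b)) h h').tendsto.comp (hu.prodMk_nhds hv)

section EpiConverges

variable {α : Type*} [TopologicalSpace α] {fs gs : ℕ → α → EReal} {f g : α → EReal}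

theorem epiConverges_of_le_liminf_of_tendsto
    (hle : ∀ x u, Tendsto u atTop (𝓝 x) → f x ≤ liminf (fun ν => fs ν (u ν)) atTop)
    (hp : ∀ x, Tendsto (fun ν => fs ν x) atTop (𝓝 (f x))) :
    EpiConverges fs f :=
  ⟨hle, fun x => ⟨fun _ => x, tendsto_const_nhds, (hp x).limsup_eq.le⟩⟩

theorem EpiConverges.add_le_liminf_add (hf : EpiConverges fs f) (hg : EpiConverges gs g)
    {x : α} {u : ℕ → α} (hu : Tendsto u atTop (𝓝 x)) :
    f x + g x ≤ liminf (fun ν => fs ν (u ν) + gs ν (u ν)) atTop :=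
  (add_le_add (hf.1 x u hu) (hg.1 x u hu)).trans EReal.le_liminf_add

end EpiConverges

theorem epiConverges_add_of_pointwise_general {n : ℕ}
    (f g : (Fin n → ℝ) → EReal) (fs gs : ℕ → (Fin n → ℝ) → EReal)
    (hf' : ∀ x, f x ≠ ⊥) (hg' : ∀ x, g x ≠ ⊥)
    (hf : EpiConverges fs f) (hg : EpiConverges gs g)
    (hfp : ∀ x, Tendsto (fun ν => fs ν x) atTop (𝓝 (f x)))
    (hgp : ∀ x, Tendsto (fun ν => gs ν x) atTop (𝓝 (g x))) :
    EpiConverges (fun ν x => fs ν x + gs ν x) (fun x => f x + g x) :=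
  epiConverges_of_le_liminf_of_tendsto (fun _ _ hu => hf.add_le_liminf_add hg hu)
    fun x => (hfp x).ereal_add (hgp x) (Or.inr (hg' x)) (Or.inl (hf' x))

theorem epiConverges_add_of_pointwise {n : ℕ}
    (f g : (Fin n → ℝ) → EReal) (fs gs : ℕ → (Fin n → ℝ) → EReal)
    (hf' : ∀ x, f x ≠ ⊥) (hg' : ∀ x, g x ≠ ⊥)
    (hfs' : ∀ ν x, fs ν x ≠ ⊥) (hgs' : ∀ ν x, gs ν x ≠ ⊥)
    (hf : EpiConverges fs f) (hg : EpiConverges gs g)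
    (hfp : ∀ x, Tendsto (fun ν => fs ν x) atTop (𝓝 (f x)))
    (hgp : ∀ x, Tendsto (fun ν => gs ν x) atTop (𝓝 (g x))) :
    EpiConverges (fun ν x => fs ν x + gs ν x) (fun x => f x + g x) :=
  epiConverges_add_of_pointwise_general f g fs gs hf' hg' hf hg hfp hgp
end

section
/- Let h, h^ν : ℝ → ℝ ∪ {±∞} with h^ν epi-converging to h and h^ν(α) → h(α) for all α ∈ ℝ, and let f : ℝⁿ → ℝ be continuous. Then the compositions h^ν ∘ f epi-converge to h ∘ f. -/
open Filter Topology

theorem EpiConverges.le_liminf_comp {α β : Type*} [TopologicalSpace α] [TopologicalSpace β]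
    {fs : ℕ → β → EReal} {f : β → EReal} (hfs : EpiConverges fs f) {g : α → β} {x : α}
    (hg : ContinuousAt g x) {u : ℕ → α} (hu : Tendsto u atTop (𝓝 x)) :
    f (g x) ≤ liminf (fun ν => fs ν (g (u ν))) atTop :=
  hfs.1 (g x) (g ∘ u) (hg.tendsto.comp hu)

theorem exists_tendsto_limsup_le_of_tendsto {α : Type*} [TopologicalSpace α]
    {fs : ℕ → α → EReal} {x : α} {a : EReal} (hx : Tendsto (fun ν => fs ν x) atTop (𝓝 a)) :
    ∃ u : ℕ → α, Tendsto u atTop (𝓝 x) ∧ limsup (fun ν => fs ν (u ν)) atTop ≤ a :=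
  ⟨fun _ => x, tendsto_const_nhds, hx.limsup_eq.le⟩

theorem epiConverges_comp_outer {n : ℕ}
    (h : ℝ → EReal) (hs : ℕ → ℝ → EReal) (f : (Fin n → ℝ) → ℝ)
    (hh : EpiConverges hs h)
    (hp : ∀ α : ℝ, Tendsto (fun ν => hs ν α) atTop (𝓝 (h α)))
    (hf : Continuous f) :
    EpiConverges (fun ν x => hs ν (f x)) (fun x => h (f x)) :=
  ⟨fun _ _ hu => hh.le_liminf_comp hf.continuousAt hu,
    fun x => exists_tendsto_limsup_le_of_tendsto (fs := fun ν y => hs ν (f y)) (hp (f x))⟩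
end

section
/- Let f^ν, f : ℝⁿ → ℝ ∪ {±∞} with f^ν epi-converging to f, and let h : ℝ → ℝ be continuous and nondecreasing, extended to the extended reals by h(-∞) = inf_α h(α) and h(∞) = sup_α h(α). Then h ∘ f^ν epi-converges to h ∘ f. -/
open Filter Topology

/-! A continuous nondecreasing map of `EReal` commutes with `liminf` and `limsup`, so applying it
preserves both halves of epi-convergence. Extending `h` by its infimum at `⊥` and its supremum at
`⊤` gives such a map: these are exactly the values that make it continuous at `±∞`. -/

theorem EpiConverges.comp_monotone {α : Type*} [TopologicalSpace α]
    {fs : ℕ → α → EReal} {f : α → EReal} {g : EReal → EReal}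
    (hf : EpiConverges fs f) (hg : Monotone g) (hgc : Continuous g) :
    EpiConverges (fun ν x => g (fs ν x)) (fun x => g (f x)) := by
  constructor
  · intro x u hu
    calc g (f x) ≤ g (liminf (fun ν => fs ν (u ν)) atTop) := hg (hf.1 x u hu)
      _ = liminf (fun ν => g (fs ν (u ν))) atTop :=
        hg.map_liminf_of_continuousAt _ hgc.continuousAt
  · intro x
    obtain ⟨u, hu, hle⟩ := hf.2 x
    refine ⟨u, hu, ?_⟩
    calc limsup (fun ν => g (fs ν (u ν))) atTop
        = g (limsup (fun ν => fs ν (u ν)) atTop) :=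
          (hg.map_limsup_of_continuousAt _ hgc.continuousAt).symm
      _ ≤ g (f x) := hg hle

namespace EReal

variable {β : Type*} {g : EReal → β}

section CompleteLattice

variable [CompleteLattice β]

theorem iInf_coe_le_apply (hbot : g ⊥ = ⨅ α : ℝ, g α) (htop : g ⊤ = ⨆ α : ℝ, g α) (y : EReal) :
    ⨅ α : ℝ, g α ≤ g y := by
  induction y using EReal.rec with
  | bot => rw [hbot]
  | coe r => exact iInf_le _ r
  | top => rw [htop]; exact (iInf_le _ 0).trans (le_iSup (fun α : ℝ => g α) 0)

theorem monotone_of_monotone_coe (hg : Monotone fun α : ℝ => g α)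
    (hbot : g ⊥ = ⨅ α : ℝ, g α) (htop : g ⊤ = ⨆ α : ℝ, g α) : Monotone g := by
  intro a b hab
  induction a using EReal.rec with
  | bot => rw [hbot]; exact iInf_coe_le_apply hbot htop b
  | top => rw [top_le_iff.mp hab]
  | coe r =>
    induction b using EReal.rec with
    | bot => exact absurd hab (not_le.mpr (bot_lt_coe r))
    | coe s => exact hg (EReal.coe_le_coe_iff.mp hab)
    | top => rw [htop]; exact le_iSup (fun α : ℝ => g α) r

end CompleteLattice

section CompleteLinearOrder

variable [CompleteLinearOrder β] [TopologicalSpace β] [OrderTopology β]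

theorem continuousAt_top_of_monotone (hg : Monotone g) (htop : g ⊤ = ⨆ α : ℝ, g α) :
    ContinuousAt g ⊤ := by
  rw [ContinuousAt, tendsto_order]
  constructor
  · intro c hc
    obtain ⟨α, hα⟩ := lt_iSup_iff.mp (htop ▸ hc)
    filter_upwards [Ioi_mem_nhds (coe_lt_top α)] with y hy
    exact hα.trans_le (hg hy.le)
  · intro c hc
    exact Eventually.of_forall fun y => (hg le_top).trans_lt hc

theorem continuousAt_bot_of_monotone (hg : Monotone g) (hbot : g ⊥ = ⨅ α : ℝ, g α) :
    ContinuousAt g ⊥ := by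
  rw [ContinuousAt, tendsto_order]
  constructor
  · intro c hc
    exact Eventually.of_forall fun y => hc.trans_le (hg bot_le)
  · intro c hc
    obtain ⟨α, hα⟩ := iInf_lt_iff.mp (hbot ▸ hc)
    filter_upwards [Iio_mem_nhds (bot_lt_coe α)] with y hy
    exact (hg hy.le).trans_lt hα

theorem continuous_of_monotone (hg : Monotone g) (hgc : Continuous fun α : ℝ => g α)
    (hbot : g ⊥ = ⨅ α : ℝ, g α) (htop : g ⊤ = ⨆ α : ℝ, g α) : Continuous g := by
  rw [continuous_iff_continuousAt]
  intro a
  induction a using EReal.rec with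
  | bot => exact continuousAt_bot_of_monotone hg hbot
  | top => exact continuousAt_top_of_monotone hg htop
  | coe r => rw [ContinuousAt, nhds_coe, tendsto_map'_iff]; exact hgc.tendsto r

end CompleteLinearOrder

end EReal

theorem epiConverges_comp_inner {n : ℕ}
    (f : (Fin n → ℝ) → EReal) (fs : ℕ → (Fin n → ℝ) → EReal)
    (h : ℝ → ℝ) (hbar : EReal → EReal)
    (hcont : Continuous h) (hmono : Monotone h)
    (hreal : ∀ α : ℝ, hbar (α : EReal) = (h α : EReal))
    (hbot : hbar ⊥ = ⨅ α : ℝ, (h α : EReal))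
    (htop : hbar ⊤ = ⨆ α : ℝ, (h α : EReal))
    (hf : EpiConverges fs f) :
    EpiConverges (fun ν x => hbar (fs ν x)) (fun x => hbar (f x)) := by
  have hcoe : (fun α : ℝ => hbar α) = fun α => (h α : EReal) := funext hreal
  rw [← hcoe] at hbot htop
  have hmono' : Monotone fun α : ℝ => hbar α := hcoe ▸ EReal.coe_strictMono.monotone.comp hmono
  have hcont' : Continuous fun α : ℝ => hbar α := hcoe ▸ continuous_coe_real_ereal.comp hcont
  have hbar_mono := EReal.monotone_of_monotone_coe hmono' hbot htop
  exact hf.comp_monotone hbar_mono (EReal.continuous_of_monotone hbar_mono hcont' hbot htop)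
end

section
/- Let f, f^ν : ℝⁿ → ℝ ∪ {±∞} be proper functions with f^ν epi-converging to f, and let ε^ν ≥ 0 with ε^ν → 0. Then every cluster point of a sequence x^ν ∈ ε^ν-argmin f^ν belongs to argmin f; i.e., LimOut(ε^ν-argmin f^ν) ⊆ argmin f. -/
open Filter Topology

/-- ε-argmin of an extended-real-valued function. -/
def EpsArgmin {α : Type*} (f : α → EReal) (ε : ℝ) : Set α :=
  {x | f x ≤ (⨅ y, f y) + (ε : EReal) ∧ f x < ⊤}

/-!
If `u k ∈ EpsArgmin (fs (N k)) (ε (N k))` converge to `x`, then for any `y` with recovery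
sequence `w`,
`f x ≤ liminf fs (N k) (u k) ≤ limsup (fs (N k) (w (N k)) + ε (N k)) ≤ f y`,
so `x` minimizes `f`. The liminf half of epi-convergence only speaks about full sequences,
so the subsequence is first extended to one, by the constant `x` off the range of `N`.
-/

lemma tendsto_extend_of_strictMono {α : Type*} [TopologicalSpace α] {N : ℕ → ℕ}
    (hN : StrictMono N) {u : ℕ → α} {x : α} (hu : Tendsto u atTop (𝓝 x)) :
    Tendsto (Function.extend N u fun _ => x) atTop (𝓝 x) := by
  rw [tendsto_atTop'] at hu ⊢
  intro s hs
  obtain ⟨K, hK⟩ := hu s hs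
  refine ⟨N K, fun ν hν => ?_⟩
  by_cases hrange : ∃ k, N k = ν
  · obtain ⟨k, rfl⟩ := hrange
    rw [hN.injective.extend_apply]
    exact hK k (hN.le_iff_le.1 hν)
  · rw [Function.extend_apply' _ _ _ hrange]
    exact mem_of_mem_nhds hs

lemma le_add_of_mem_epsArgmin {α : Type*} {g : α → EReal} {ε : ℝ} {x : α}
    (hx : x ∈ EpsArgmin g ε) (y : α) : g x ≤ g y + ε :=
  hx.1.trans (add_le_add_left (iInf_le g y) _)

namespace EpiConverges

variable {α : Type*} [TopologicalSpace α] {fs : ℕ → α → EReal} {f : α → EReal} {N : ℕ → ℕ}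

lemma le_liminf_comp_s10 (hconv : EpiConverges fs f) (hN : StrictMono N) {u : ℕ → α} {x : α}
    (hu : Tendsto u atTop (𝓝 x)) : f x ≤ liminf (fun k => fs (N k) (u k)) atTop := by
  set v := Function.extend N u fun _ => x
  calc f x ≤ liminf (fun ν => fs ν (v ν)) atTop :=
        hconv.1 x v (tendsto_extend_of_strictMono hN hu)
    _ ≤ liminf ((fun ν => fs ν (v ν)) ∘ N) atTop := hN.tendsto_atTop.liminf_le_liminf_comp
    _ = liminf (fun k => fs (N k) (u k)) atTop := by
        simp only [Function.comp_def, v, hN.injective.extend_apply]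

lemma exists_limsup_comp_le (hconv : EpiConverges fs f) (hN : StrictMono N) (y : α) :
    ∃ w : ℕ → α, limsup (fun k => fs (N k) (w k)) atTop ≤ f y := by
  obtain ⟨w, -, hw⟩ := hconv.2 y
  exact ⟨w ∘ N, hN.tendsto_atTop.limsup_comp_le_limsup.trans hw⟩

lemma le_of_mem_limOut_epsArgmin (hconv : EpiConverges fs f) {ε : ℕ → ℝ}
    (hε0 : Tendsto ε atTop (𝓝 0)) {x : α}
    (hx : x ∈ LimOut (fun ν => EpsArgmin (fs ν) (ε ν))) (y : α) : f x ≤ f y := by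
  obtain ⟨N, hN, u, hu, hux⟩ := hx
  obtain ⟨w, hw⟩ := hconv.exists_limsup_comp_le hN y
  have hεN : limsup (fun k => (ε (N k) : EReal)) atTop = 0 :=
    (EReal.tendsto_coe.2 (hε0.comp hN.tendsto_atTop)).limsup_eq
  calc f x ≤ liminf (fun k => fs (N k) (u k)) atTop := hconv.le_liminf_comp_s10 hN hux
    _ ≤ limsup (fun k => fs (N k) (u k)) atTop := liminf_le_limsup
    _ ≤ limsup (fun k => fs (N k) (w k) + ε (N k)) atTop :=
        limsup_le_limsup (.of_forall fun k => le_add_of_mem_epsArgmin (hu k) (w k))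
    _ ≤ limsup (fun k => fs (N k) (w k)) atTop + limsup (fun k => (ε (N k) : EReal)) atTop :=
        EReal.limsup_add_le (by simp [hεN]) (by simp [hεN])
    _ ≤ f y := by rwa [hεN, add_zero]

end EpiConverges

theorem limOut_epsArgmin_subset_argmin_general {n : ℕ}
    (f : (Fin n → ℝ) → EReal) (fs : ℕ → (Fin n → ℝ) → EReal)
    (hfproper : (∀ x, f x ≠ ⊥) ∧ (∃ x, f x ≠ ⊤))
    (hconv : EpiConverges fs f)
    (ε : ℕ → ℝ) (hε0 : Tendsto ε atTop (𝓝 0)) :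
    LimOut (fun ν => EpsArgmin (fs ν) (ε ν)) ⊆
      {x | f x = (⨅ y, f y) ∧ f x < ⊤} := by
  intro x hx
  have hmin : ∀ y, f x ≤ f y := hconv.le_of_mem_limOut_epsArgmin hε0 hx
  obtain ⟨y₀, hy₀⟩ := hfproper.2
  exact ⟨le_antisymm (le_iInf hmin) (iInf_le f x), (hmin y₀).trans_lt hy₀.lt_top⟩

theorem limOut_epsArgmin_subset_argmin {n : ℕ}
    (f : (Fin n → ℝ) → EReal) (fs : ℕ → (Fin n → ℝ) → EReal)
    (hfproper : (∀ x, f x ≠ ⊥) ∧ (∃ x, f x ≠ ⊤))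
    (hfsproper : ∀ ν, (∀ x, fs ν x ≠ ⊥) ∧ (∃ x, fs ν x ≠ ⊤))
    (hconv : EpiConverges fs f)
    (ε : ℕ → ℝ) (hε : ∀ ν, 0 ≤ ε ν) (hε0 : Tendsto ε atTop (𝓝 0)) :
    LimOut (fun ν => EpsArgmin (fs ν) (ε ν)) ⊆
      {x | f x = (⨅ y, f y) ∧ f x < ⊤} :=
  limOut_epsArgmin_subset_argmin_general f fs hfproper hconv ε hε0
end

section
/- Let f, f^ν : ℝⁿ → ℝ ∪ {±∞} be proper with f^ν epi-converging to f. If a sequence of minimizers x^ν ∈ argmin f^ν converges along a subsequence indexed by N, then inf f^ν → inf f along N. -/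
/-!
Every recovery sequence `u ν → y` gives `inf f^ν ≤ f^ν (u ν)`, so `limsup inf f^ν ≤ f y` for all
`y`, and hence `limsup inf f^ν ≤ inf f`. Conversely, along `N` we have `inf f^ν = f^ν (x^ν)` with
`x^ν → x̄`; filling the gaps of `N` with `x̄` turns `x^ν` into a sequence converging to `x̄` on all
of `ℕ`, so the liminf inequality of epi-convergence gives `inf f ≤ f x̄ ≤ liminf inf f^ν` along `N`.
-/

open Filter Topology

theorem Filter.Tendsto.extend_of_strictMono {α : Type*} [TopologicalSpace α] {N : ℕ → ℕ}
    (hN : StrictMono N) {u : ℕ → α} {a : α} (hu : Tendsto u atTop (𝓝 a)) :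
    Tendsto (Function.extend N u fun _ => a) atTop (𝓝 a) := by
  intro U hU
  obtain ⟨K, hK⟩ := mem_atTop_sets.mp (hu hU)
  refine mem_atTop_sets.mpr ⟨N K, fun ν hν => ?_⟩
  by_cases h : ∃ k, N k = ν
  · obtain ⟨k, rfl⟩ := h
    rw [Set.mem_preimage, hN.injective.extend_apply]
    exact hK k (hN.le_iff_le.mp hν)
  · rw [Set.mem_preimage, Function.extend_apply' _ _ _ h]
    exact mem_of_mem_nhds hU

namespace EpiConverges

variable {α : Type*} [TopologicalSpace α] {fs : ℕ → α → EReal} {f : α → EReal}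

theorem limsup_iInf_le (hconv : EpiConverges fs f) :
    limsup (fun ν => ⨅ y, fs ν y) atTop ≤ ⨅ y, f y :=
  le_iInf fun y =>
    let ⟨u, _, hlimsup⟩ := hconv.2 y
    (limsup_le_limsup (Eventually.of_forall fun ν => iInf_le _ (u ν))).trans hlimsup

theorem le_liminf_comp_strictMono (hconv : EpiConverges fs f) {N : ℕ → ℕ} (hN : StrictMono N)
    {u : ℕ → α} {a : α} (hu : Tendsto u atTop (𝓝 a)) :
    f a ≤ liminf (fun k => fs (N k) (u k)) atTop := by
  set v := Function.extend N u fun _ => a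
  have hv : ∀ k, v (N k) = u k := hN.injective.extend_apply _ _
  calc f a ≤ liminf (fun ν => fs ν (v ν)) atTop := hconv.1 a v (hu.extend_of_strictMono hN)
    _ ≤ liminf ((fun ν => fs ν (v ν)) ∘ N) atTop := hN.tendsto_atTop.liminf_le_liminf_comp
    _ = liminf (fun k => fs (N k) (u k)) atTop := by simp only [Function.comp_def, hv]

end EpiConverges

theorem inf_tendsto_along_convergent_minimizers_general {n : ℕ}
    (f : (Fin n → ℝ) → EReal) (fs : ℕ → (Fin n → ℝ) → EReal)
    (hconv : EpiConverges fs f)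
    (x : ℕ → (Fin n → ℝ))
    (hmin : ∀ ν, fs ν (x ν) = (⨅ y, fs ν y) ∧ fs ν (x ν) < ⊤)
    (N : ℕ → ℕ) (hN : StrictMono N)
    (hconvx : ∃ xbar, Tendsto (fun k => x (N k)) atTop (𝓝 xbar)) :
    Tendsto (fun k => ⨅ y, fs (N k) y) atTop (𝓝 (⨅ y, f y)) := by
  obtain ⟨xbar, hx⟩ := hconvx
  have hlower : (⨅ y, f y) ≤ liminf (fun k => ⨅ y, fs (N k) y) atTop :=
    calc (⨅ y, f y) ≤ f xbar := iInf_le _ xbar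
      _ ≤ liminf (fun k => fs (N k) (x (N k))) atTop := hconv.le_liminf_comp_strictMono hN hx
      _ = liminf (fun k => ⨅ y, fs (N k) y) atTop := by simp only [fun k => (hmin (N k)).1]
  have hupper : limsup (fun k => ⨅ y, fs (N k) y) atTop ≤ ⨅ y, f y :=
    hN.tendsto_atTop.limsup_comp_le_limsup.trans hconv.limsup_iInf_le
  exact tendsto_of_le_liminf_of_limsup_le hlower hupper

theorem inf_tendsto_along_convergent_minimizers {n : ℕ}
    (f : (Fin n → ℝ) → EReal) (fs : ℕ → (Fin n → ℝ) → EReal)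
    (hfproper : (∀ x, f x ≠ ⊥) ∧ (∃ x, f x ≠ ⊤))
    (hfsproper : ∀ ν, (∀ x, fs ν x ≠ ⊥) ∧ (∃ x, fs ν x ≠ ⊤))
    (hconv : EpiConverges fs f)
    (x : ℕ → (Fin n → ℝ))
    (hmin : ∀ ν, fs ν (x ν) = (⨅ y, fs ν y) ∧ fs ν (x ν) < ⊤)
    (N : ℕ → ℕ) (hN : StrictMono N)
    (hconvx : ∃ xbar, Tendsto (fun k => x (N k)) atTop (𝓝 xbar)) :
    Tendsto (fun k => ⨅ y, fs (N k) y) atTop (𝓝 (⨅ y, f y)) :=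
  inf_tendsto_along_convergent_minimizers_general f fs hconv x hmin N hN hconvx
end

section
/- Let f, f^ν : ℝⁿ → ℝ ∪ {±∞} be proper with f^ν epi-converging to f and inf f^ν → inf f. Then for every ε > 0, argmin f ⊆ LimInn(ε-argmin f^ν); i.e., every minimizer of f is the limit of points x^ν with f^ν(x^ν) ≤ inf f^ν + ε. -/
open Filter Topology

/-! A recovery sequence `u` for a finite minimiser `x` has `limsup fs ν (u ν) ≤ f x = inf f`, while
`inf fs ν → inf f`; so with a margin of `ε / 2` on each side, `fs ν (u ν) < inf fs ν + ε`
for all large `ν`. -/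

theorem EReal.eventually_lt_add_of_limsup_le_of_tendsto {ι : Type*} {l : Filter ι}
    {s t : ι → EReal} {a ε : ℝ} (hε : 0 < ε) (hs : limsup s l ≤ a)
    (ht : Tendsto t l (𝓝 a)) : ∀ᶠ i in l, s i < t i + ε := by
  have hs' : ∀ᶠ i in l, s i < ((a + ε / 2 : ℝ) : EReal) :=
    eventually_lt_of_limsup_lt (hs.trans_lt (EReal.coe_lt_coe_iff.2 (by linarith)))
  have ht' : ∀ᶠ i in l, ((a - ε / 2 : ℝ) : EReal) < t i :=
    ht.eventually (eventually_gt_nhds (EReal.coe_lt_coe_iff.2 (by linarith)))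
  filter_upwards [hs', ht'] with i hsi hti
  calc s i < ((a + ε / 2 : ℝ) : EReal) := hsi
    _ = ((a - ε / 2 : ℝ) : EReal) + ε := by norm_cast; ring
    _ ≤ t i + ε := by gcongr

theorem EpiConverges.mem_limInn_epsArgmin {α : Type*} [TopologicalSpace α]
    {fs : ℕ → α → EReal} {f : α → EReal} (hconv : EpiConverges fs f)
    (hinf : Tendsto (fun ν => ⨅ y, fs ν y) atTop (𝓝 (⨅ y, f y)))
    {x : α} (hx : f x = ⨅ y, f y) (hx_top : f x ≠ ⊤) (hx_bot : f x ≠ ⊥)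
    {ε : ℝ} (hε : 0 < ε) : x ∈ LimInn (fun ν => EpsArgmin (fs ν) ε) := by
  obtain ⟨u, hu, hlimsup⟩ := hconv.2 x
  have ha : ((f x).toReal : EReal) = f x := EReal.coe_toReal hx_top hx_bot
  rw [← hx, ← ha] at hinf
  rw [← ha] at hlimsup
  refine ⟨u, ?_, hu⟩
  filter_upwards [EReal.eventually_lt_add_of_limsup_le_of_tendsto hε hlimsup hinf] with ν hν
  exact ⟨hν.le, hν.trans_le le_top⟩

theorem argmin_subset_limInn_epsArgmin_general {n : ℕ}
    (f : (Fin n → ℝ) → EReal) (fs : ℕ → (Fin n → ℝ) → EReal)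
    (hfproper : (∀ x, f x ≠ ⊥) ∧ (∃ x, f x ≠ ⊤))
    (hconv : EpiConverges fs f)
    (hinf : Tendsto (fun ν => ⨅ y, fs ν y) atTop (𝓝 (⨅ y, f y))) :
    ∀ ε : ℝ, 0 < ε →
      {x | f x = (⨅ y, f y) ∧ f x < ⊤} ⊆
        LimInn (fun ν => EpsArgmin (fs ν) ε) :=
  fun _ hε x ⟨hxmin, hxtop⟩ => hconv.mem_limInn_epsArgmin hinf hxmin hxtop.ne (hfproper.1 x) hε

theorem argmin_subset_limInn_epsArgmin {n : ℕ}
    (f : (Fin n → ℝ) → EReal) (fs : ℕ → (Fin n → ℝ) → EReal)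
    (hfproper : (∀ x, f x ≠ ⊥) ∧ (∃ x, f x ≠ ⊤))
    (hfsproper : ∀ ν, (∀ x, fs ν x ≠ ⊥) ∧ (∃ x, fs ν x ≠ ⊤))
    (hconv : EpiConverges fs f)
    (hinf : Tendsto (fun ν => ⨅ y, fs ν y) atTop (𝓝 (⨅ y, f y))) :
    ∀ ε : ℝ, 0 < ε →
      {x | f x = (⨅ y, f y) ∧ f x < ⊤} ⊆
        LimInn (fun ν => EpsArgmin (fs ν) ε) :=
  argmin_subset_limInn_epsArgmin_general f fs hfproper hconv hinf
end

section
/- Let S, S^ν : ℝⁿ ⇉ ℝᵐ with LimOut(gph S^ν) ⊆ gph S, let ε^ν ≥ 0 with ε^ν → 0, and ȳ ∈ ℝᵐ. Then LimOut((S^ν)⁻¹(B(ȳ, ε^ν))) ⊆ S⁻¹(ȳ): every cluster point of points x^ν satisfying dist(ȳ, S^ν(x^ν)) ≤ ε^ν (more precisely, y^ν ∈ S^ν(x^ν) with ‖y^ν − ȳ‖ ≤ ε^ν) solves ȳ ∈ S(x). -/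
open Filter Topology

/-- Graph of a set-valued mapping. -/
def Gph {α β : Type*} (S : α → Set β) : Set (α × β) := {p | p.2 ∈ S p.1}

/-- Outer semicontinuity of a set-valued mapping at every point:
all cluster points of values along converging arguments belong to the value. -/
def Osc {α β : Type*} [TopologicalSpace α] [TopologicalSpace β] (S : α → Set β) : Prop :=
  ∀ (xbar : α) (x : ℕ → α), Tendsto x atTop (𝓝 xbar) →
    LimOut (fun ν => S (x ν)) ⊆ S xbar

theorem mk_mem_limOut_gph_of_mem_limOut_approx {α β : Type*} [TopologicalSpace α]
    [SeminormedAddCommGroup β] {Ss : ℕ → α → Set β} {ε : ℕ → ℝ}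
    (hε0 : Tendsto ε atTop (𝓝 0)) {xbar : α} {ybar : β}
    (hx : xbar ∈ LimOut (fun ν => {x | ∃ y ∈ Ss ν x, ‖y - ybar‖ ≤ ε ν})) :
    (xbar, ybar) ∈ LimOut (fun ν => Gph (Ss ν)) := by
  obtain ⟨N, hN, x, hx_mem, hx_lim⟩ := hx
  choose y hy hy_near using hx_mem
  have hy_lim : Tendsto y atTop (𝓝 ybar) :=
    tendsto_iff_norm_sub_tendsto_zero.2 <|
      squeeze_zero (fun _ => norm_nonneg _) hy_near (hε0.comp hN.tendsto_atTop)
  exact ⟨N, hN, fun k => (x k, y k), hy, hx_lim.prodMk_nhds hy_lim⟩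

theorem limOut_approx_solutions_subset_general {n m : ℕ}
    (S : (Fin n → ℝ) → Set (Fin m → ℝ)) (Ss : ℕ → (Fin n → ℝ) → Set (Fin m → ℝ))
    (hgraph : LimOut (fun ν => Gph (Ss ν)) ⊆ Gph S)
    (ε : ℕ → ℝ) (hε0 : Tendsto ε atTop (𝓝 0))
    (ybar : Fin m → ℝ) :
    LimOut (fun ν => {x | ∃ y ∈ Ss ν x, ‖y - ybar‖ ≤ ε ν}) ⊆ {x | ybar ∈ S x} :=
  fun _ hx => hgraph (mk_mem_limOut_gph_of_mem_limOut_approx hε0 hx)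

theorem limOut_approx_solutions_subset {n m : ℕ}
    (S : (Fin n → ℝ) → Set (Fin m → ℝ)) (Ss : ℕ → (Fin n → ℝ) → Set (Fin m → ℝ))
    (hgraph : LimOut (fun ν => Gph (Ss ν)) ⊆ Gph S)
    (ε : ℕ → ℝ) (hε : ∀ ν, 0 ≤ ε ν) (hε0 : Tendsto ε atTop (𝓝 0))
    (ybar : Fin m → ℝ) :
    LimOut (fun ν => {x | ∃ y ∈ Ss ν x, ‖y - ybar‖ ≤ ε ν}) ⊆ {x | ybar ∈ S x} :=
  limOut_approx_solutions_subset_general S Ss hgraph ε hε0 ybar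
end

section
/- Let S, S^ν : ℝⁿ ⇉ ℝᵐ with gph S ⊆ LimInn(gph S^ν), and ȳ ∈ ℝᵐ. Then there exist ε^ν ≥ 0 with ε^ν → 0 such that S⁻¹(ȳ) ⊆ LimInn((S^ν)⁻¹(B(ȳ, ε^ν))): every solution of ȳ ∈ S(x) is the limit of ε^ν-solutions of the approximating generalized equations. -/
/-!
Pick a countable dense set `D` of solutions of `ȳ ∈ S x`. Each `x ∈ D` is approached by
points `(x^ν, y^ν) ∈ gph S^ν` whose residuals `y^ν - ȳ` tend to `0`; a diagonal argument gives
one sequence `ε^ν → 0` eventually dominating the residuals of every `x ∈ D` at once, so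
`D ⊆ LimInn ((S^ν)⁻¹(B(ȳ, ε^ν)))`. Inner limits are closed, hence they contain `closure D`,
which contains all solutions.
-/

open Filter Topology

open Metric

section InnerLimit

variable {E : Type*} [PseudoMetricSpace E] {A : ℕ → Set E}

lemma mem_limInn_iff {x : E} :
    x ∈ LimInn A ↔ ∀ ε > 0, ∀ᶠ ν in atTop, ∃ a ∈ A ν, dist a x < ε := by
  constructor
  · rintro ⟨u, hu, hux⟩ ε hε
    filter_upwards [hu, Metric.tendsto_nhds.1 hux ε hε] with ν hν hdist
    exact ⟨u ν, hν, hdist⟩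
  · intro h
    have hnear : ∀ ν : ℕ, ∃ a, (A ν).Nonempty →
        a ∈ A ν ∧ dist x a < infDist x (A ν) + 1 / ((ν : ℝ) + 1) := by
      intro ν
      by_cases hne : (A ν).Nonempty
      · obtain ⟨a, ha, hdist⟩ := (infDist_lt_iff hne).1
          (lt_add_of_pos_right (infDist x (A ν)) Nat.one_div_pos_of_nat)
        exact ⟨a, fun _ => ⟨ha, hdist⟩⟩
      · exact ⟨x, fun h => absurd h hne⟩
    choose u hu using hnear
    have hne : ∀ᶠ ν in atTop, (A ν).Nonempty := by
      filter_upwards [h 1 one_pos] with ν ⟨a, ha, _⟩ using ⟨a, ha⟩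
    refine ⟨u, hne.mono fun ν hν => (hu ν hν).1, Metric.tendsto_nhds.2 fun ε hε => ?_⟩
    have hslack : ∀ᶠ ν : ℕ in atTop, 1 / ((ν : ℝ) + 1) < ε / 2 :=
      tendsto_one_div_add_atTop_nhds_zero_nat.eventually (gt_mem_nhds (half_pos hε))
    filter_upwards [h (ε / 2) (half_pos hε), hslack] with ν ⟨a, ha, hax⟩ hν
    have hinf := infDist_le_dist_of_mem (x := x) ha
    linarith [(hu ν ⟨a, ha⟩).2, dist_comm (u ν) x, dist_comm a x]

lemma isClosed_limInn : IsClosed (LimInn A) := by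
  refine isClosed_of_closure_subset fun x hx => mem_limInn_iff.2 fun ε hε => ?_
  obtain ⟨z, hz, hxz⟩ := Metric.mem_closure_iff.1 hx (ε / 2) (half_pos hε)
  filter_upwards [mem_limInn_iff.1 hz (ε / 2) (half_pos hε)] with ν ⟨a, ha, haz⟩
  exact ⟨a, ha, by linarith [dist_triangle a z x, dist_comm x z]⟩

end InnerLimit

lemma exists_tendsto_zero_eventually_norm_le {ι α E : Type*} [Countable ι]
    [SeminormedAddGroup E] {l : Filter α} {δ : ι → α → E}
    (hδ : ∀ i, Tendsto (δ i) l (𝓝 0)) :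
    ∃ ε : α → ℝ, (∀ ν, 0 ≤ ε ν) ∧ Tendsto ε l (𝓝 0) ∧ ∀ i, ∀ᶠ ν in l, ‖δ i ν‖ ≤ ε ν := by
  obtain ⟨e, he⟩ := exists_injective_nat ι
  set w : ι → ℝ := fun i => 1 / ((e i : ℝ) + 1)
  have hw_pos : ∀ i, 0 < w i := fun i => Nat.one_div_pos_of_nat
  have hw_le_one : ∀ i, w i ≤ 1 := fun i =>
    div_le_one_of_le₀ (by simp) (by positivity)
  have hw : Tendsto w cofinite (𝓝 0) :=
    tendsto_one_div_add_atTop_nhds_zero_nat.comp (Nat.cofinite_eq_atTop ▸ he.tendsto_cofinite)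
  have hnorm : ∀ i, Tendsto (fun ν => ‖δ i ν‖) l (𝓝 0) := fun i => by
    simpa using (hδ i).norm
  -- Capping `‖δ i‖` at `w i` keeps the supremum finite and lets only finitely many `i`
  -- contribute more than any given `η > 0`.
  set ε : α → ℝ := fun ν => ⨆ i, min ‖δ i ν‖ (w i)
  have hε_le : ∀ η > 0, ∀ᶠ ν in l, ε ν ≤ η := by
    intro η hη
    have hfin : {i | ¬ w i < η}.Finite := eventually_cofinite.1 (hw.eventually (gt_mem_nhds hη))
    filter_upwards [(eventually_all_finite hfin).2 fun i _ =>
      (hnorm i).eventually (eventually_le_nhds hη)] with ν hν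
    refine Real.iSup_le (fun i => ?_) hη.le
    by_cases hi : w i < η
    · exact (min_le_right _ _).trans hi.le
    · exact (min_le_left _ _).trans (hν i hi)
  refine ⟨ε, fun ν => Real.iSup_nonneg fun i => le_min (norm_nonneg _) (hw_pos i).le,
    tendsto_order.2 ⟨fun a ha => Eventually.of_forall fun ν => ha.trans_le
      (Real.iSup_nonneg fun i => le_min (norm_nonneg _) (hw_pos i).le),
      fun a ha => (hε_le (a / 2) (half_pos ha)).mono fun ν hν => hν.trans_lt (half_lt_self ha)⟩,
    fun i => ?_⟩
  filter_upwards [(hnorm i).eventually (eventually_le_nhds (hw_pos i))] with ν hν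
  have hbdd : BddAbove (Set.range fun j => min ‖δ j ν‖ (w j)) :=
    ⟨1, Set.forall_mem_range.2 fun j => (min_le_right _ _).trans (hw_le_one j)⟩
  calc ‖δ i ν‖ = min ‖δ i ν‖ (w i) := (min_eq_left hν).symm
    _ ≤ ε ν := le_ciSup hbdd i

lemma exists_residual_of_mem_limInn_gph {α β : Type*} [TopologicalSpace α]
    [SeminormedAddCommGroup β] {T : ℕ → α → Set β} {x : α} {y : β}
    (h : (x, y) ∈ LimInn fun ν => Gph (T ν)) :
    ∃ δ : ℕ → β, Tendsto δ atTop (𝓝 0) ∧ ∀ ε : ℕ → ℝ, (∀ᶠ ν in atTop, ‖δ ν‖ ≤ ε ν) →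
      x ∈ LimInn fun ν => {x | ∃ y' ∈ T ν x, ‖y' - y‖ ≤ ε ν} := by
  obtain ⟨p, hp, hpt⟩ := h
  refine ⟨fun ν => (p ν).2 - y, tendsto_sub_nhds_zero_iff.2 hpt.snd_nhds,
    fun ε hε => ⟨fun ν => (p ν).1, ?_, hpt.fst_nhds⟩⟩
  filter_upwards [hp, hε] with ν hpν hεν using ⟨(p ν).2, hpν, hεν⟩

theorem solutions_subset_limInn_approx {n m : ℕ}
    (S : (Fin n → ℝ) → Set (Fin m → ℝ)) (Ss : ℕ → (Fin n → ℝ) → Set (Fin m → ℝ))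
    (hgraph : Gph S ⊆ LimInn (fun ν => Gph (Ss ν)))
    (ybar : Fin m → ℝ) :
    ∃ ε : ℕ → ℝ, (∀ ν, 0 ≤ ε ν) ∧ Tendsto ε atTop (𝓝 0) ∧
      {x | ybar ∈ S x} ⊆
        LimInn (fun ν => {x | ∃ y ∈ Ss ν x, ‖y - ybar‖ ≤ ε ν}) := by
  obtain ⟨D, hDsol, hDcount, hDdense⟩ :=
    (TopologicalSpace.IsSeparable.of_separableSpace {x | ybar ∈ S x}).exists_countable_dense_subset
  have := hDcount.to_subtype
  choose δ hδ hδε using fun x : D => exists_residual_of_mem_limInn_gph (hgraph (hDsol x.2))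
  obtain ⟨ε, hε_nonneg, hε, hδ_le⟩ := exists_tendsto_zero_eventually_norm_le hδ
  refine ⟨ε, hε_nonneg, hε, ?_⟩
  calc {x | ybar ∈ S x} ⊆ closure D := hDdense
    _ ⊆ _ := isClosed_limInn.closure_subset_iff.2 fun x hx => hδε ⟨x, hx⟩ ε (hδ_le _)
end

section
/- Let f, g : ℝⁿ → ℝ ∪ {±∞}, ε, ρ ≥ 0, and suppose inf f, inf g ∈ [−ρ, ρ−ε), argmin f ∩ B(0,ρ) ≠ ∅, and argmin g ∩ B(0,ρ) ≠ ∅. Then |inf f − inf g| ≤ dl_ρ(epi f, epi g), where dl_ρ is the truncated Hausdorff distance between the epigraphs computed with the product norm max{‖x‖, |α|} on ℝⁿ×ℝ. -/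
/-! If `x` minimizes `f` with `‖x‖ ≤ ρ` and `|inf f| ≤ ρ`, then `(x, inf f)` lies in
`epi f ∩ B(0, ρ)`, and every point of `epi g` has height at least `inf g`, so it lies at
distance at least `inf g - inf f` from `epi g`. Exchanging `f` and `g` bounds the other sign. -/

open Filter Topology ENNReal

/-- Epigraph of an extended-real-valued function, as a subset of the product space
`(Fin n → ℝ) × ℝ`, whose norm is `max {‖x‖, |α|}`. -/
def Epi {n : ℕ} (f : (Fin n → ℝ) → EReal) : Set ((Fin n → ℝ) × ℝ) :=
  {p | f p.1 ≤ (p.2 : EReal)}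

/-- The excess of `C` over `D`: `sup_{z ∈ C} dist(z, D)` (in `ℝ≥0∞`, so it is `0`
when `C = ∅` and `∞` when `C ≠ ∅` and `D = ∅`). -/
noncomputable def Exs {α : Type*} [PseudoEMetricSpace α] (C D : Set α) : ℝ≥0∞ :=
  ⨆ z ∈ C, EMetric.infEdist z D

/-- The truncated Hausdorff distance between `C` and `D` with truncation radius `ρ`. -/
noncomputable def TruncHausdorff {α : Type*} [SeminormedAddGroup α]
    (ρ : ℝ) (C D : Set α) : ℝ≥0∞ :=
  max (Exs (C ∩ Metric.closedBall 0 ρ) D) (Exs (D ∩ Metric.closedBall 0 ρ) C)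

lemma EReal.exists_eq_coe_abs_le {m : EReal} {ρ : ℝ} (h₁ : ((-ρ : ℝ) : EReal) ≤ m)
    (h₂ : m ≤ ρ) : ∃ a : ℝ, m = a ∧ |a| ≤ ρ := by
  induction m using EReal.rec with
  | bot => exact absurd h₁ (not_le.2 (EReal.bot_lt_coe _))
  | top => exact absurd h₂ (not_le.2 (EReal.coe_lt_top _))
  | coe a => exact ⟨a, rfl, abs_le.2 ⟨by exact_mod_cast h₁, by exact_mod_cast h₂⟩⟩

lemma infEDist_le_exs {α : Type*} [PseudoEMetricSpace α] {C D : Set α} {z : α} (hz : z ∈ C) :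
    Metric.infEDist z D ≤ Exs C D :=
  le_iSup₂ (f := fun z _ => Metric.infEDist z D) z hz

lemma mk_mem_epi_inter_closedBall {n : ℕ} {f : (Fin n → ℝ) → EReal} {ρ a : ℝ}
    {x : Fin n → ℝ} (hx : ‖x‖ ≤ ρ) (hfx : f x ≤ a) (ha : |a| ≤ ρ) :
    (x, a) ∈ Epi f ∩ Metric.closedBall 0 ρ :=
  ⟨hfx, by rw [mem_closedBall_zero_iff, Prod.norm_mk]; exact max_le hx ha⟩

lemma ofReal_sub_le_infEDist_epi {n : ℕ} {g : (Fin n → ℝ) → EReal} {b : ℝ}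
    (hg : (b : EReal) ≤ ⨅ y, g y) (x : Fin n → ℝ) (a : ℝ) :
    ENNReal.ofReal (b - a) ≤ Metric.infEDist (x, a) (Epi g) := by
  refine le_iInf₂ fun w hw => ?_
  have hbw : b ≤ w.2 := by exact_mod_cast hg.trans ((iInf_le g w.1).trans hw)
  calc ENNReal.ofReal (b - a) ≤ ENNReal.ofReal |w.2 - a| :=
        ENNReal.ofReal_le_ofReal (by linarith [le_abs_self (w.2 - a)])
    _ = edist a w.2 := by rw [edist_dist, Real.dist_eq, abs_sub_comm]
    _ ≤ edist (x, a) w := by rw [Prod.edist_eq]; exact le_max_right _ _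

lemma ofReal_sub_le_exs_epi {n : ℕ} {f g : (Fin n → ℝ) → EReal} {ρ a b : ℝ}
    {x : Fin n → ℝ} (hx : ‖x‖ ≤ ρ) (hfx : f x ≤ a) (ha : |a| ≤ ρ)
    (hg : (b : EReal) ≤ ⨅ y, g y) :
    ENNReal.ofReal (b - a) ≤ Exs (Epi f ∩ Metric.closedBall 0 ρ) (Epi g) :=
  (ofReal_sub_le_infEDist_epi hg x a).trans
    (infEDist_le_exs (mk_mem_epi_inter_closedBall hx hfx ha))

theorem abs_inf_sub_inf_le_truncHausdorff_general {n : ℕ}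
    (f g : (Fin n → ℝ) → EReal) (ε ρ : ℝ) (hε : 0 ≤ ε)
    (hfinf₁ : ((-ρ : ℝ) : EReal) ≤ ⨅ x, f x) (hfinf₂ : (⨅ x, f x) < ((ρ - ε : ℝ) : EReal))
    (hginf₁ : ((-ρ : ℝ) : EReal) ≤ ⨅ x, g x) (hginf₂ : (⨅ x, g x) < ((ρ - ε : ℝ) : EReal))
    (hfargmin : ∃ x : Fin n → ℝ, ‖x‖ ≤ ρ ∧ f x = ⨅ y, f y)
    (hgargmin : ∃ x : Fin n → ℝ, ‖x‖ ≤ ρ ∧ g x = ⨅ y, g y) :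
    EReal.abs ((⨅ x, f x) - ⨅ x, g x) ≤ TruncHausdorff ρ (Epi f) (Epi g) := by
  have hερ : ((ρ - ε : ℝ) : EReal) ≤ ρ := EReal.coe_le_coe_iff.2 (by linarith)
  obtain ⟨a, ha, haρ⟩ := EReal.exists_eq_coe_abs_le hfinf₁ (hfinf₂.le.trans hερ)
  obtain ⟨b, hb, hbρ⟩ := EReal.exists_eq_coe_abs_le hginf₁ (hginf₂.le.trans hερ)
  obtain ⟨x, hxρ, hx⟩ := hfargmin
  obtain ⟨y, hyρ, hy⟩ := hgargmin
  rw [ha, hb, ← EReal.coe_sub, EReal.abs_def, abs_sub_comm, abs_eq_max_neg, neg_sub,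
    ENNReal.ofReal_max]
  exact max_le_max (ofReal_sub_le_exs_epi hxρ (hx.trans ha).le haρ hb.ge)
    (ofReal_sub_le_exs_epi hyρ (hy.trans hb).le hbρ ha.ge)

theorem abs_inf_sub_inf_le_truncHausdorff {n : ℕ}
    (f g : (Fin n → ℝ) → EReal) (ε ρ : ℝ) (hε : 0 ≤ ε) (hρ : 0 ≤ ρ)
    (hfinf₁ : ((-ρ : ℝ) : EReal) ≤ ⨅ x, f x) (hfinf₂ : (⨅ x, f x) < ((ρ - ε : ℝ) : EReal))
    (hginf₁ : ((-ρ : ℝ) : EReal) ≤ ⨅ x, g x) (hginf₂ : (⨅ x, g x) < ((ρ - ε : ℝ) : EReal))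
    (hfargmin : ∃ x : Fin n → ℝ, ‖x‖ ≤ ρ ∧ f x = ⨅ y, f y)
    (hgargmin : ∃ x : Fin n → ℝ, ‖x‖ ≤ ρ ∧ g x = ⨅ y, g y) :
    EReal.abs ((⨅ x, f x) - ⨅ x, g x) ≤ TruncHausdorff ρ (Epi f) (Epi g) :=
  abs_inf_sub_inf_le_truncHausdorff_general f g ε ρ hε hfinf₁ hfinf₂ hginf₁ hginf₂ hfargmin hgargmin
end
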